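/- arXiv:2003.01439 — 2 statements merged into one kernel-verified Lean document; each statement's English description precedes it below -/
import Mathlib

section
/- Let M be a metric space, let I be a nonempty countable index set, and let (x_i, y_i)_{i∈I} be pairs of distinct points of M. Then the following are equivalent: (i) there exists f : M → ℝ which is 1-Lipschitz and satisfies f(x_i) − f(y_i) = d(x_i, y_i) for every i ∈ I; (ii) the family (x_i, y_i)_{i∈I} is cyclically monotone, i.e. for every finite sequence of indices i_1, …, i_m in I one has d(x_{i_1},y_{i_1}) + d(x_{i_2},y_{i_2}) + ⋯ + d(x_{i_m},y_{i_m}) ≤ d(x_{i_1},y_{i_2}) + d(x_{i_2},y_{i_3}) + ⋯ + d(x_{i_{m-1}},y_{i_m}) + d(x_{i_m},y_{i_1}). -/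
/-!
The implication from a norming 1-Lipschitz function to cyclic monotonicity is a telescoping
sum. Conversely, following Rockafellar's construction of a convex potential from a cyclically
monotone operator, fix an index `i₀` and let `f p` be the supremum, over all chains
`i₀ = a 0, a 1, …, a n`, of the gain
`∑ r < n, (d(x_{a r}, y_{a r}) - d(x_{a r}, y_{a (r+1)})) + d(x_{a n}, y_{a n}) - d(x_{a n}, p)`.
Each gain is 1-Lipschitz in `p`, cyclic monotonicity bounds it by `d(p, y_{i₀})`, and appending
`j` to a chain shows `f (x j) ≥ f (y j) + d(x j, y j)`.
-/

open Finset Function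

theorem Finset.sum_range_succ_mod_succ {β : Type*} [AddCommMonoid β] (g : ℕ → ℕ → β) (n : ℕ) :
    ∑ r ∈ range (n + 1), g r ((r + 1) % (n + 1)) = ∑ r ∈ range n, g r (r + 1) + g n 0 := by
  rw [sum_range_succ, Nat.mod_self]
  congr 1
  exact sum_congr rfl fun r hr => by rw [Nat.mod_eq_of_lt (by simpa using hr)]

theorem Finset.sum_range_comp_succ_mod {β : Type*} [AddCommMonoid β] (g : ℕ → β) (m : ℕ) :
    ∑ r ∈ range m, g ((r + 1) % m) = ∑ r ∈ range m, g r := by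
  cases m with
  | zero => simp
  | succ n => rw [sum_range_succ_mod_succ (fun _ s => g s), sum_range_succ']

theorem LipschitzWith.ciSup {α ι : Type*} [PseudoMetricSpace α] [Nonempty ι] {K : NNReal}
    {f : ι → α → ℝ} (hf : ∀ i, LipschitzWith K (f i))
    (hbdd : ∀ p, BddAbove (Set.range fun i => f i p)) :
    LipschitzWith K fun p => ⨆ i, f i p :=
  LipschitzWith.of_le_add_mul K fun p q => ciSup_le fun i =>
    ((hf i).le_add_mul p q).trans (by gcongr; exact le_ciSup (hbdd q) i)

instance {I : Type*} (i₀ : I) : Nonempty {a : ℕ → I // a 0 = i₀} := ⟨⟨fun _ => i₀, rfl⟩⟩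

section CyclicallyMonotone

variable {M I : Type*} [PseudoMetricSpace M] (x y : I → M)

def CyclicallyMonotone : Prop :=
  ∀ m : ℕ, 1 ≤ m → ∀ i : ℕ → I,
    ∑ r ∈ range m, dist (x (i r)) (y (i r)) ≤
      ∑ r ∈ range m, dist (x (i r)) (y (i ((r + 1) % m)))

theorem cyclicallyMonotone_of_lipschitzWith {f : M → ℝ} (hf : LipschitzWith 1 f)
    (hfxy : ∀ i, f (x i) - f (y i) = dist (x i) (y i)) : CyclicallyMonotone x y := by
  intro m _ i
  have hstep (p q : M) : f p - f q ≤ dist p q :=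
    sub_le_iff_le_add'.mpr (by simpa using hf.le_add_mul p q)
  calc ∑ r ∈ range m, dist (x (i r)) (y (i r))
      = ∑ r ∈ range m, f (x (i r)) - ∑ r ∈ range m, f (y (i r)) := by
        rw [← sum_sub_distrib]; exact sum_congr rfl fun r _ => (hfxy (i r)).symm
    _ = ∑ r ∈ range m, (f (x (i r)) - f (y (i ((r + 1) % m)))) := by
        rw [sum_sub_distrib, sum_range_comp_succ_mod (fun r => f (y (i r)))]
    _ ≤ ∑ r ∈ range m, dist (x (i r)) (y (i ((r + 1) % m))) :=
        sum_le_sum fun r _ => hstep _ _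

def chainValue (a : ℕ → I) (n : ℕ) (p : M) : ℝ :=
  ∑ r ∈ range n, (dist (x (a r)) (y (a r)) - dist (x (a r)) (y (a (r + 1)))) +
    (dist (x (a n)) (y (a n)) - dist (x (a n)) p)

theorem lipschitzWith_chainValue (a : ℕ → I) (n : ℕ) : LipschitzWith 1 (chainValue x y a n) :=
  LipschitzWith.of_le_add fun p q => by
    have := dist_triangle (x (a n)) p q
    simp only [chainValue]
    linarith

variable {x y}

theorem CyclicallyMonotone.chainValue_nonpos (h : CyclicallyMonotone x y) (a : ℕ → I) (n : ℕ) :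
    chainValue x y a n (y (a 0)) ≤ 0 := by
  have hcycle := h (n + 1) (by omega) a
  rw [sum_range_succ, sum_range_succ_mod_succ (fun r s => dist (x (a r)) (y (a s)))] at hcycle
  simp only [chainValue, sum_sub_distrib]
  linarith

theorem CyclicallyMonotone.chainValue_le_dist (h : CyclicallyMonotone x y) {i₀ : I}
    (a : {a : ℕ → I // a 0 = i₀}) (n : ℕ) (p : M) : chainValue x y a n p ≤ dist p (y i₀) := by
  have hp := (lipschitzWith_chainValue x y a n).le_add_mul p (y i₀)
  have h0 := h.chainValue_nonpos a n
  rw [a.2] at h0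
  push_cast at hp
  linarith

theorem chainValue_update_succ (a : ℕ → I) (n : ℕ) (j : I) :
    chainValue x y (update a (n + 1) j) (n + 1) (x j) =
      chainValue x y a n (y j) + dist (x j) (y j) := by
  have hprefix : ∀ r ∈ range n,
      dist (x (update a (n + 1) j r)) (y (update a (n + 1) j r)) -
          dist (x (update a (n + 1) j r)) (y (update a (n + 1) j (r + 1))) =
        dist (x (a r)) (y (a r)) - dist (x (a r)) (y (a (r + 1))) := by
    intro r hr
    have hr : r < n := mem_range.mp hr
    rw [update_of_ne (by omega), update_of_ne (by omega)]
  simp only [chainValue, sum_range_succ, sum_congr rfl hprefix, update_self,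
    update_of_ne (show n ≠ n + 1 by omega), dist_self]
  ring

variable (x y)

noncomputable def chainPotential (i₀ : I) (p : M) : ℝ :=
  ⨆ c : ℕ × {a : ℕ → I // a 0 = i₀}, chainValue x y c.2 c.1 p

variable {x y}

theorem CyclicallyMonotone.bddAbove_chainValue (h : CyclicallyMonotone x y) (i₀ : I) (p : M) :
    BddAbove (Set.range fun c : ℕ × {a : ℕ → I // a 0 = i₀} => chainValue x y c.2 c.1 p) :=
  ⟨dist p (y i₀), by rintro _ ⟨c, rfl⟩; exact h.chainValue_le_dist c.2 c.1 p⟩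

theorem CyclicallyMonotone.lipschitzWith_chainPotential (h : CyclicallyMonotone x y) (i₀ : I) :
    LipschitzWith 1 (chainPotential x y i₀) :=
  LipschitzWith.ciSup (fun c => lipschitzWith_chainValue x y c.2 c.1) (h.bddAbove_chainValue i₀)

theorem CyclicallyMonotone.chainPotential_sub_eq_dist (h : CyclicallyMonotone x y) (i₀ j : I) :
    chainPotential x y i₀ (x j) - chainPotential x y i₀ (y j) = dist (x j) (y j) := by
  have hle : chainPotential x y i₀ (x j) - chainPotential x y i₀ (y j) ≤ dist (x j) (y j) :=
    sub_le_iff_le_add'.mpr <| by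
      simpa using (h.lipschitzWith_chainPotential i₀).le_add_mul (x j) (y j)
  have hge : chainPotential x y i₀ (y j) ≤ chainPotential x y i₀ (x j) - dist (x j) (y j) := by
    refine ciSup_le fun ⟨n, a⟩ => ?_
    have hext : update a.1 (n + 1) j 0 = i₀ := by rw [update_of_ne (by omega), a.2]
    have hchain : chainValue x y a n (y j) + dist (x j) (y j) ≤ chainPotential x y i₀ (x j) :=
      chainValue_update_succ (x := x) (y := y) a.1 n j ▸
        le_ciSup (h.bddAbove_chainValue i₀ (x j)) (n + 1, ⟨update a.1 (n + 1) j, hext⟩)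
    exact le_sub_iff_add_le.mpr hchain
  linarith

end CyclicallyMonotone

theorem stmt_5_general {M : Type*} [MetricSpace M] {I : Type*} [Nonempty I]
    (x y : I → M) :
    (∃ f : M → ℝ, LipschitzWith 1 f ∧ ∀ i : I, f (x i) - f (y i) = dist (x i) (y i)) ↔
    (∀ m : ℕ, 1 ≤ m → ∀ i : ℕ → I,
      ∑ r ∈ Finset.range m, dist (x (i r)) (y (i r)) ≤
        ∑ r ∈ Finset.range m, dist (x (i r)) (y (i ((r + 1) % m)))) := by
  refine ⟨fun ⟨f, hf, hfxy⟩ => cyclicallyMonotone_of_lipschitzWith x y hf hfxy,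
    fun (h : CyclicallyMonotone x y) => ?_⟩
  obtain ⟨i₀⟩ := ‹Nonempty I›
  exact ⟨chainPotential x y i₀, h.lipschitzWith_chainPotential i₀, h.chainPotential_sub_eq_dist i₀⟩

/-- Theorem 2.6 (i)⇔(iv) of the paper: a family of pairs of distinct points is simultaneously
normed by a single 1-Lipschitz real function iff it is cyclically monotone. -/
theorem stmt_5 {M : Type*} [MetricSpace M] {I : Type*} [Nonempty I] [Countable I]
    (x y : I → M) (hxy : ∀ i : I, x i ≠ y i) :
    (∃ f : M → ℝ, LipschitzWith 1 f ∧ ∀ i : I, f (x i) - f (y i) = dist (x i) (y i)) ↔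
    (∀ m : ℕ, 1 ≤ m → ∀ i : ℕ → I,
      ∑ r ∈ Finset.range m, dist (x (i r)) (y (i r)) ≤
        ∑ r ∈ Finset.range m, dist (x (i r)) (y (i ((r + 1) % m)))) :=
  stmt_5_general x y
end

section
/- Let M be a uniformly discrete, bounded metric space with a distinguished point 0, let (x_i, y_i)_{i=1}^n be pairs of distinct points of M, let λ_i > 0 with Σ_{i=1}^n λ_i = 1, and let f : M → ℝ be 1-Lipschitz with f(0) = 0 and f(x_i) − f(y_i) = d(x_i, y_i) for all i. Assume: (α) for every pair of distinct j, k ∈ {1,…,n} there is a finite sequence of pairwise distinct indices i_1, …, i_m ∈ {1,…,n} containing both j and k such that d(x_{i_1},y_{i_1}) + ⋯ + d(x_{i_m},y_{i_m}) = d(x_{i_1},y_{i_2}) + ⋯ + d(x_{i_m},y_{i_1}); and (β) for every x ∈ M there are distinct points s, t ∈ {x_1, y_1, …, x_n, y_n} with f(t) − f(s) = d(t,s) and d(s,x) + d(t,x) = d(s,t). Let X be a real normed space, x ∈ X with ‖x‖ = 1, and x* a continuous linear functional on X with ‖x*‖ = 1 and x*(x) = 1, such that every continuous linear functional v* with ‖v*‖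 ≤ 1 and v*(x) = 1 equals x*. Then every map g from M to the dual X* with g(0) = 0, ‖g(p) − g(q)‖ ≤ d(p,q) for all p, q ∈ M, and Σ_{i=1}^n λ_i (g(x_i) − g(y_i))(x)/d(x_i, y_i) = 1 satisfies g(p) = f(p)·x* for every p ∈ M. -/
/-!
Put `h p = g p v` and `K p = g p - f p • xs`; both `h` and `f` are 1-Lipschitz. Since every
quotient in the weighted average is at most `1`, `h` realises the distance on each pair
`(xᵢ, yᵢ)`, as `f` does. If `h` realises the distance on a pair `(p, q)`, then
`(g p - g q) / d(p, q)` has norm at most `1` and takes the value `1` at `v`, hence equals `xs`;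
so `K` agrees at `p` and `q` whenever both `h` and `f` are tight there. Along a cycle of (α) the
tightness of a 1-Lipschitz function passes from the pairs `(x_{i_r}, y_{i_r})` to the pairs
`(x_{i_r}, y_{i_{r+1}})`, so `K` is constant on the support. By (β) every point lies metrically
between two support points on which `f`, and therefore `h`, is tight; tightness passes to the
point, so `K` is constant on `M`, and `K z = 0`.
-/

open Finset

theorem Finset.eq_one_of_sum_mul_eq_one {ι 𝕜 : Type*} [Field 𝕜] [LinearOrder 𝕜]
    [IsStrictOrderedRing 𝕜] {s : Finset ι} {w a : ι → 𝕜} (hw : ∀ i ∈ s, 0 < w i)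
    (hw1 : ∑ i ∈ s, w i = 1) (ha : ∀ i ∈ s, a i ≤ 1) (hwa : ∑ i ∈ s, w i * a i = 1) :
    ∀ i ∈ s, a i = 1 := by
  have hle : ∀ i ∈ s, w i * a i ≤ w i := fun i hi =>
    mul_le_of_le_one_right (hw i hi).le (ha i hi)
  intro i hi
  have := (sum_eq_sum_iff_of_le hle).1 (hwa.trans hw1.symm) i hi
  exact (mul_eq_left₀ (hw i hi).ne').1 this

theorem Finset.sum_range_succ_mod {β : Type*} [AddCommMonoid β] (F : ℕ → β) (m : ℕ) :
    ∑ r ∈ range m, F ((r + 1) % m) = ∑ r ∈ range m, F r := by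
  cases m with
  | zero => rfl
  | succ k =>
    rw [sum_range_succ, sum_range_succ', Nat.mod_self]
    congr 1
    exact sum_congr rfl fun r hr => by rw [Nat.mod_eq_of_lt (by simpa using hr)]

theorem Nat.apply_eq_apply_zero_of_succ_lt {β : Type*} {F : ℕ → β} {m : ℕ}
    (hF : ∀ r, r + 1 < m → F (r + 1) = F r) : ∀ r < m, F r = F 0
  | 0, _ => rfl
  | r + 1, hr => (hF r hr).trans (apply_eq_apply_zero_of_succ_lt hF r (by omega))

section Metric

variable {M : Type*} [PseudoMetricSpace M]

theorem LipschitzWith.sub_le_dist {φ : M → ℝ} (hφ : LipschitzWith 1 φ) (p q : M) :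
    φ p - φ q ≤ dist p q := by
  simpa [Real.dist_eq] using (le_abs_self _).trans (hφ.dist_le_mul p q)

theorem LipschitzWith.sub_eq_dist_of_sum_mul_div_eq_one {ι : Type*} [Fintype ι] {φ : M → ℝ}
    (hφ : LipschitzWith 1 φ) {x y : ι → M} {lam : ι → ℝ} (hlam : ∀ i, 0 < lam i)
    (hlam1 : ∑ i, lam i = 1)
    (hsum : ∑ i, lam i * ((φ (x i) - φ (y i)) / dist (x i) (y i)) = 1) (i : ι) :
    φ (x i) - φ (y i) = dist (x i) (y i) := by
  have hi := eq_one_of_sum_mul_eq_one (fun i _ => hlam i) hlam1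
    (fun i _ => div_le_one_of_le₀ (hφ.sub_le_dist (x i) (y i)) dist_nonneg) hsum i (mem_univ i)
  -- `a / 0 = 0 ≠ 1`, so the pair `(x i, y i)` is automatically nondegenerate
  exact (div_eq_one_iff_eq (div_ne_zero_iff.1 (hi ▸ one_ne_zero)).2).1 hi

/-- Summing the inequalities `φ (a r) - φ (b (r + 1)) ≤ dist (a r) (b (r + 1))` over the
cycle gives an equality, since the `φ (b r)` only get permuted. -/
theorem LipschitzWith.sub_eq_dist_of_cycle {φ : M → ℝ} (hφ : LipschitzWith 1 φ)
    {a b : ℕ → M} {m : ℕ} (htight : ∀ r < m, φ (a r) - φ (b r) = dist (a r) (b r))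
    (hcycle : ∑ r ∈ range m, dist (a r) (b r) = ∑ r ∈ range m, dist (a r) (b ((r + 1) % m))) :
    ∀ r < m, φ (a r) - φ (b ((r + 1) % m)) = dist (a r) (b ((r + 1) % m)) := by
  have hsum : ∑ r ∈ range m, (φ (a r) - φ (b ((r + 1) % m))) =
      ∑ r ∈ range m, dist (a r) (b ((r + 1) % m)) := by
    rw [sum_sub_distrib, sum_range_succ_mod (fun r => φ (b r)), ← sum_sub_distrib, ← hcycle]
    exact sum_congr rfl fun r hr => htight r (mem_range.1 hr)
  intro r hr
  exact (sum_eq_sum_iff_of_le fun r _ => hφ.sub_le_dist _ _).1 hsum r (mem_range.2 hr)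

theorem LipschitzWith.sub_eq_dist_of_dist_add_dist_eq {φ : M → ℝ} (hφ : LipschitzWith 1 φ)
    {s t p : M} (hst : φ t - φ s = dist t s) (hp : dist s p + dist t p = dist s t) :
    φ t - φ p = dist t p := by
  have h₁ := hφ.sub_le_dist p s
  have h₂ := hφ.sub_le_dist t p
  rw [dist_comm t s] at hst
  rw [dist_comm p s] at h₁
  linarith

theorem apply_eq_apply_zero_of_cycle {β : Type*} {φ ψ : M → ℝ} (hφ : LipschitzWith 1 φ)
    (hψ : LipschitzWith 1 ψ) {K : M → β}
    (hK : ∀ p q, φ p - φ q = dist p q → ψ p - ψ q = dist p q → K p = K q)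
    {a b : ℕ → M} {m : ℕ} (hφab : ∀ r < m, φ (a r) - φ (b r) = dist (a r) (b r))
    (hψab : ∀ r < m, ψ (a r) - ψ (b r) = dist (a r) (b r))
    (hcycle : ∑ r ∈ range m, dist (a r) (b r) = ∑ r ∈ range m, dist (a r) (b ((r + 1) % m))) :
    ∀ r < m, K (b r) = K (b 0) := by
  refine Nat.apply_eq_apply_zero_of_succ_lt fun r hr => ?_
  have hshift : (r + 1) % m = r + 1 := Nat.mod_eq_of_lt hr
  have hφ' := hφ.sub_eq_dist_of_cycle hφab hcycle r (by omega)
  have hψ' := hψ.sub_eq_dist_of_cycle hψab hcycle r (by omega)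
  rw [hshift] at hφ' hψ'
  exact (hK _ _ hφ' hψ').symm.trans (hK _ _ (hφab r (by omega)) (hψab r (by omega)))

theorem apply_eq_apply_of_cycles {ι β : Type*} {φ ψ : M → ℝ} (hφ : LipschitzWith 1 φ)
    (hψ : LipschitzWith 1 ψ) {K : M → β}
    (hK : ∀ p q, φ p - φ q = dist p q → ψ p - ψ q = dist p q → K p = K q) {x y : ι → M}
    (hφi : ∀ i, φ (x i) - φ (y i) = dist (x i) (y i))
    (hψi : ∀ i, ψ (x i) - ψ (y i) = dist (x i) (y i))
    (hcycles : ∀ j k : ι, j ≠ k → ∃ (m : ℕ) (idx : ℕ → ι),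
      (∃ r < m, idx r = j) ∧ (∃ r < m, idx r = k) ∧
      ∑ r ∈ range m, dist (x (idx r)) (y (idx r)) =
        ∑ r ∈ range m, dist (x (idx r)) (y (idx ((r + 1) % m))))
    {s t : M} (hs : ∃ i, s = x i ∨ s = y i) (ht : ∃ i, t = x i ∨ t = y i) : K s = K t := by
  have hxy : ∀ i, K (x i) = K (y i) := fun i => hK _ _ (hφi i) (hψi i)
  have hyy : ∀ j k, K (y j) = K (y k) := by
    intro j k
    obtain rfl | hjk := eq_or_ne j k
    · rfl
    obtain ⟨m, idx, ⟨rj, hrj, rfl⟩, ⟨rk, hrk, rfl⟩, hcycle⟩ := hcycles j k hjk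
    have hconst := apply_eq_apply_zero_of_cycle hφ hψ hK (a := fun r => x (idx r))
      (b := fun r => y (idx r)) (fun r _ => hφi (idx r)) (fun r _ => hψi (idx r)) hcycle
    exact (hconst rj hrj).trans (hconst rk hrk).symm
  obtain ⟨j, rfl | rfl⟩ := hs <;> obtain ⟨k, rfl | rfl⟩ := ht
  exacts [(hxy j).trans ((hyy j k).trans (hxy k).symm), (hxy j).trans (hyy j k),
    (hyy j k).trans (hxy k).symm, hyy j k]

theorem apply_eq_apply_of_dist_add_dist_eq {β : Type*} {φ ψ : M → ℝ} (hφ : LipschitzWith 1 φ)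
    (hψ : LipschitzWith 1 ψ) {K : M → β}
    (hK : ∀ p q, φ p - φ q = dist p q → ψ p - ψ q = dist p q → K p = K q) {s t p : M}
    (hφst : φ t - φ s = dist t s) (hψst : ψ t - ψ s = dist t s)
    (hp : dist s p + dist t p = dist s t) : K t = K p :=
  hK t p (hφ.sub_eq_dist_of_dist_add_dist_eq hφst hp)
    (hψ.sub_eq_dist_of_dist_add_dist_eq hψst hp)

end Metric

section Dual

variable {X : Type*} [NormedAddCommGroup X] [NormedSpace ℝ X] {v : X} {xs : X →L[ℝ] ℝ}

theorem ContinuousLinearMap.eq_smul_of_norm_le_of_apply_eq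
    (huniq : ∀ vs : X →L[ℝ] ℝ, ‖vs‖ ≤ 1 → vs v = 1 → vs = xs) {φ : X →L[ℝ] ℝ} {c : ℝ}
    (hφ : ‖φ‖ ≤ c) (hφv : φ v = c) : φ = c • xs := by
  rcases (norm_nonneg φ |>.trans hφ).eq_or_lt with rfl | hc
  · simpa using hφ
  · have hnorm : ‖c⁻¹ • φ‖ ≤ 1 := by
      rw [norm_smul, norm_inv, Real.norm_of_nonneg hc.le]
      exact inv_mul_le_one_of_le₀ hφ hc.le
    have hval : (c⁻¹ • φ) v = 1 := by simp [hφv, hc.ne']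
    rw [← huniq _ hnorm hval, smul_inv_smul₀ hc.ne']

variable {M : Type*} [PseudoMetricSpace M] {g : M → X →L[ℝ] ℝ}

theorem lipschitzWith_one_apply (hv : ‖v‖ ≤ 1) (hg : ∀ p q, ‖g p - g q‖ ≤ dist p q) :
    LipschitzWith 1 fun p => g p v := by
  refine LipschitzWith.of_dist_le_mul fun p q => ?_
  rw [Real.dist_eq, NNReal.coe_one, one_mul, ← sub_apply, ← Real.norm_eq_abs]
  calc ‖(g p - g q) v‖ ≤ ‖g p - g q‖ * ‖v‖ := (g p - g q).le_opNorm v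
    _ ≤ dist p q * 1 := by gcongr; exact hg p q
    _ = dist p q := mul_one _

theorem sub_smul_eq_sub_smul_of_sub_eq_dist
    (huniq : ∀ vs : X →L[ℝ] ℝ, ‖vs‖ ≤ 1 → vs v = 1 → vs = xs)
    (hg : ∀ p q, ‖g p - g q‖ ≤ dist p q) {f : M → ℝ} {p q : M}
    (hgpq : g p v - g q v = dist p q) (hfpq : f p - f q = dist p q) :
    g p - f p • xs = g q - f q • xs := by
  have hnorming : g p - g q = dist p q • xs :=
    ContinuousLinearMap.eq_smul_of_norm_le_of_apply_eq huniq (hg p q) (by simpa using hgpq)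
  rw [sub_eq_sub_iff_sub_eq_sub, hnorming, ← hfpq]
  exact sub_smul (f p) (f q) xs

end Dual

theorem stmt_14_general {M : Type*} [MetricSpace M]
    (z : M) (n : ℕ) (x y : Fin n → M)
    (lam : Fin n → ℝ) (hlam : ∀ i, 0 < lam i) (hlam1 : ∑ i, lam i = 1)
    (f : M → ℝ) (hf : LipschitzWith 1 f) (hf0 : f z = 0)
    (hfi : ∀ i : Fin n, f (x i) - f (y i) = dist (x i) (y i))
    (halpha : ∀ j k : Fin n, j ≠ k →
      ∃ (m : ℕ) (i : ℕ → Fin n), 1 ≤ m ∧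
        (∀ r < m, ∀ s < m, i r = i s → r = s) ∧
        (∃ r < m, i r = j) ∧ (∃ r < m, i r = k) ∧
        ∑ r ∈ Finset.range m, dist (x (i r)) (y (i r)) =
          ∑ r ∈ Finset.range m, dist (x (i r)) (y (i ((r + 1) % m))))
    (hbeta : ∀ p : M, ∃ s t : M, s ≠ t ∧
      (∃ i : Fin n, s = x i ∨ s = y i) ∧ (∃ i : Fin n, t = x i ∨ t = y i) ∧
      f t - f s = dist t s ∧ dist s p + dist t p = dist s t)
    {X : Type*} [NormedAddCommGroup X] [NormedSpace ℝ X]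
    (v : X) (hv : ‖v‖ = 1)
    (xs : X →L[ℝ] ℝ) (hxsv : xs v = 1)
    (huniq : ∀ vs : X →L[ℝ] ℝ, ‖vs‖ ≤ 1 → vs v = 1 → vs = xs) :
    ∀ g : M → (X →L[ℝ] ℝ), g z = 0 →
      (∀ p q : M, ‖g p - g q‖ ≤ dist p q) →
      (∑ i, lam i * ((g (x i) - g (y i)) v / dist (x i) (y i))) = 1 →
      ∀ p : M, g p = f p • xs := by
  intro g hgz hg hsum
  set K : M → X →L[ℝ] ℝ := fun p => g p - f p • xs
  have hgv : LipschitzWith 1 fun p => g p v := lipschitzWith_one_apply hv.le hg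
  have hK : ∀ p q, g p v - g q v = dist p q → f p - f q = dist p q → K p = K q :=
    fun p q => sub_smul_eq_sub_smul_of_sub_eq_dist huniq hg
  have hgi : ∀ i, g (x i) v - g (y i) v = dist (x i) (y i) :=
    hgv.sub_eq_dist_of_sum_mul_div_eq_one hlam hlam1 (by simpa only [sub_apply] using hsum)
  have hsupp : ∀ s t, (∃ i, s = x i ∨ s = y i) → (∃ i, t = x i ∨ t = y i) → K s = K t :=
    fun s t => apply_eq_apply_of_cycles hgv hf hK hgi hfi fun j k hjk =>
      let ⟨m, idx, _, _, hj, hk, hcycle⟩ := halpha j k hjk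
      ⟨m, idx, hj, hk, hcycle⟩
  have hreach : ∀ p, ∃ t, (∃ i, t = x i ∨ t = y i) ∧ K t = K p := by
    intro p
    obtain ⟨s, t, -, hs, ht, hfst, hp⟩ := hbeta p
    have hgst : g t v - g s v = dist t s := by
      have := congrArg (fun φ : X →L[ℝ] ℝ => φ v) (hsupp s t hs ht)
      simp only [K, sub_apply, smul_apply, smul_eq_mul, hxsv, mul_one] at this
      linarith
    exact ⟨t, ht, apply_eq_apply_of_dist_add_dist_eq hgv hf hK hgst hfst hp⟩
  intro p
  obtain ⟨t, ht, htp⟩ := hreach p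
  obtain ⟨t', ht', ht'z⟩ := hreach z
  have hKz : K z = 0 := by simp only [K, hgz, hf0, zero_smul, sub_zero]
  exact sub_eq_zero.1 (htp.symm.trans ((hsupp t t' ht ht').trans (ht'z.trans hKz)))

/-- Theorem 4.1(a) of the paper in dual form: if `μ = Σ λᵢ m_{xᵢ,yᵢ}` is a finitely supported
point of Fréchet differentiability of `ℱ(M)` with derivative `f` (conditions (α) and (β)) and
`v` is a point of Gâteaux differentiability of `X` with derivative `xs`, then the only norming
functional for `μ ⊗ v` in `Lip₀(M, X*) = (ℱ(M) ⊗̂_π X)*` is `f ⊗ xs`. -/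
theorem stmt_14 {M : Type*} [MetricSpace M]
    (hud : ∃ θ : ℝ, 0 < θ ∧ ∀ p q : M, p ≠ q → θ ≤ dist p q)
    (hbd : ∃ D : ℝ, ∀ p q : M, dist p q ≤ D)
    (z : M) (n : ℕ) (x y : Fin n → M) (hxy : ∀ i : Fin n, x i ≠ y i)
    (lam : Fin n → ℝ) (hlam : ∀ i, 0 < lam i) (hlam1 : ∑ i, lam i = 1)
    (f : M → ℝ) (hf : LipschitzWith 1 f) (hf0 : f z = 0)
    (hfi : ∀ i : Fin n, f (x i) - f (y i) = dist (x i) (y i))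
    (halpha : ∀ j k : Fin n, j ≠ k →
      ∃ (m : ℕ) (i : ℕ → Fin n), 1 ≤ m ∧
        (∀ r < m, ∀ s < m, i r = i s → r = s) ∧
        (∃ r < m, i r = j) ∧ (∃ r < m, i r = k) ∧
        ∑ r ∈ Finset.range m, dist (x (i r)) (y (i r)) =
          ∑ r ∈ Finset.range m, dist (x (i r)) (y (i ((r + 1) % m))))
    (hbeta : ∀ p : M, ∃ s t : M, s ≠ t ∧
      (∃ i : Fin n, s = x i ∨ s = y i) ∧ (∃ i : Fin n, t = x i ∨ t = y i) ∧
      f t - f s = dist t s ∧ dist s p + dist t p = dist s t)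
    {X : Type*} [NormedAddCommGroup X] [NormedSpace ℝ X]
    (v : X) (hv : ‖v‖ = 1)
    (xs : X →L[ℝ] ℝ) (hxs : ‖xs‖ = 1) (hxsv : xs v = 1)
    (huniq : ∀ vs : X →L[ℝ] ℝ, ‖vs‖ ≤ 1 → vs v = 1 → vs = xs) :
    ∀ g : M → (X →L[ℝ] ℝ), g z = 0 →
      (∀ p q : M, ‖g p - g q‖ ≤ dist p q) →
      (∑ i, lam i * ((g (x i) - g (y i)) v / dist (x i) (y i))) = 1 →
      ∀ p : M, g p = f p • xs :=
  stmt_14_general z n x y lam hlam hlam1 f hf hf0 hfi halpha hbeta v hv xs hxsv huniq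
end
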